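/- (A non-unique fixed point of the concurrent memory channel forces the controlled-unitary case.) Let α = (α_x, α_y, α_z) ∈ ℝ³ satisfy 0 ≤ |α_z| ≤ α_y ≤ α_x ≤ π/2, let D(α) = exp((i/2)(α_x σ_x⊗σ_x + α_y σ_y⊗σ_y + α_z σ_z⊗σ_z)), let W_2 be any 2×2 unitary matrix, and define the concurrent channel on the memory by C(ξ) = W_2 · Tr_H[ D(α) ( ξ ⊗ (I₂/2) ) D(α)† ] · W_2†. If there exists a 2×2 density matrix ξ with ξ ≠ I₂/2 and C(ξ) = ξ, then α_y = α_z = 0. -/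

import Mathlib

open Matrix Kronecker BigOperators ComplexOrder

noncomputable def σx : Matrix (Fin 2) (Fin 2) ℂ := !![0, 1; 1, 0]
noncomputable def σy : Matrix (Fin 2) (Fin 2) ℂ := !![0, -Complex.I; Complex.I, 0]
noncomputable def σz : Matrix (Fin 2) (Fin 2) ℂ := !![1, 0; 0, -1]

/-- The Cartan interaction `D(α) = exp((i/2)(α_x σ_x⊗σ_x + α_y σ_y⊗σ_y + α_z σ_z⊗σ_z))`. -/
noncomputable def Dmat (αx αy αz : ℝ) : Matrix (Fin 2 × Fin 2) (Fin 2 × Fin 2) ℂ :=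
  NormedSpace.exp ((Complex.I / 2) • ((αx : ℂ) • (σx ⊗ₖ σx) +
    (αy : ℂ) • (σy ⊗ₖ σy) + (αz : ℂ) • (σz ⊗ₖ σz)))

/-- Partial trace over the second (system) factor. -/
noncomputable def ptraceH (X : Matrix (Fin 2 × Fin 2) (Fin 2 × Fin 2) ℂ) :
    Matrix (Fin 2) (Fin 2) ℂ :=
  Matrix.of fun a b => ∑ i : Fin 2, X (a, i) (b, i)

/-!
The interaction `D(α)` is diagonal in the basis `σ_k ⊗ σ_k` (with `σ_0 = 1`), so tracing out the
maximally mixed system turns it into a Pauli channel `ξ ↦ ∑ p_k σ_k ξ σ_k`. Such a channel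
multiplies the Pauli coordinates `tr (σ_j ξ) / 2` of `ξ` by
`1, cos α_y cos α_z, cos α_x cos α_z, cos α_x cos α_y`, and in the given range of `α` the last three
factors lie in `[0, cos α_y]`. Conjugation by `W₂` preserves the Hilbert–Schmidt norm
`tr (ξᴴ ξ) = 2 ∑ |tr (σ_j ξ) / 2|²`, so a fixed point `ξ ≠ 1/2` (which has some nonzero traceless
coordinate) needs one of these factors to be `1`, whence `cos α_y = 1`.
-/

theorem NormedSpace.exp_smul_of_mul_self_eq_one {𝔸 : Type*} [Ring 𝔸] [Algebra ℂ 𝔸]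
    [TopologicalSpace 𝔸] [IsTopologicalRing 𝔸] [T2Space 𝔸] [ContinuousSMul ℂ 𝔸]
    {A : 𝔸} (hA : A * A = 1) (c : ℂ) :
    NormedSpace.exp (c • A) = Complex.cosh c • (1 : 𝔸) + Complex.sinh c • A := by
  have hpow (k : ℕ) : A ^ (2 * k) = 1 := by rw [pow_mul, sq, hA, one_pow]
  rw [NormedSpace.exp_eq_tsum ℂ]
  refine HasSum.tsum_eq (HasSum.even_add_odd ?_ ?_)
  · convert (Complex.hasSum_cosh c).smul_const (1 : 𝔸) using 2 with k
    rw [smul_pow, hpow, smul_smul, div_eq_inv_mul]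
  · convert (Complex.hasSum_sinh c).smul_const A using 2 with k
    rw [smul_pow, pow_succ A, hpow, one_mul, smul_smul, div_eq_inv_mul]

theorem Matrix.commute_kronecker_self_of_mul_eq_neg {R n : Type*} [CommRing R] [Fintype n]
    {A B : Matrix n n R} (h : A * B = -(B * A)) : Commute (A ⊗ₖ A) (B ⊗ₖ B) := by
  rw [Commute, SemiconjBy, ← Matrix.mul_kronecker_mul, ← Matrix.mul_kronecker_mul, h,
    ← neg_one_smul R (B * A), Matrix.smul_kronecker, Matrix.kronecker_smul, smul_smul,
    neg_one_mul, neg_neg, one_smul]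

theorem Matrix.trace_conjTranspose_mul_self_unitary_conj {n α : Type*} [Fintype n] [DecidableEq n]
    [CommRing α] [StarRing α] {W : Matrix n n α} (hW : W ∈ Matrix.unitaryGroup n α)
    (Y : Matrix n n α) :
    ((W * Y * Wᴴ)ᴴ * (W * Y * Wᴴ)).trace = (Yᴴ * Y).trace := by
  have hWW : Wᴴ * W = 1 := Matrix.mem_unitaryGroup_iff'.mp hW
  calc ((W * Y * Wᴴ)ᴴ * (W * Y * Wᴴ)).trace = (W * (Yᴴ * (Wᴴ * W) * Y) * Wᴴ).trace := by
        simp only [Matrix.conjTranspose_mul, Matrix.conjTranspose_conjTranspose, Matrix.mul_assoc]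
    _ = (Yᴴ * Y).trace := by
        rw [hWW, Matrix.mul_one, Matrix.trace_mul_cycle, hWW, Matrix.one_mul]

noncomputable def pauli : Fin 4 → Matrix (Fin 2) (Fin 2) ℂ := ![1, σx, σy, σz]

def pauliSign (k j : Fin 4) : ℝ := if k = 0 ∨ j = 0 ∨ k = j then 1 else -1

theorem pauli_conjTranspose (k : Fin 4) : (pauli k)ᴴ = pauli k := by
  fin_cases k <;> ext i j <;> fin_cases i <;> fin_cases j <;> simp [pauli, σx, σy, σz]

theorem pauli_mul_self (k : Fin 4) : pauli k * pauli k = 1 := by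
  fin_cases k <;> ext i j <;> fin_cases i <;> fin_cases j <;> simp [pauli, σx, σy, σz]

theorem pauli_anticommute (j k : Fin 4) (hj : j ≠ 0) (hk : k ≠ 0) (hjk : j ≠ k) :
    pauli j * pauli k = -(pauli k * pauli j) := by
  fin_cases j <;> fin_cases k <;> simp at hj hk hjk <;> ext a b <;> fin_cases a <;> fin_cases b <;>
    simp [pauli, σx, σy, σz]

theorem trace_pauli_mul_pauli (k l : Fin 4) :
    (pauli k * pauli l).trace = if k = l then 2 else 0 := by
  fin_cases k <;> fin_cases l <;> simp [pauli, σx, σy, σz, Matrix.trace_fin_two] <;> norm_num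

theorem pauli_mul_pauli_mul_pauli (k j : Fin 4) :
    pauli k * pauli j * pauli k = (pauliSign k j : ℂ) • pauli j := by
  fin_cases k <;> fin_cases j <;> ext a b <;> fin_cases a <;> fin_cases b <;>
    simp [pauli, pauliSign, σx, σy, σz]

theorem eq_sum_smul_pauli (X : Matrix (Fin 2) (Fin 2) ℂ) :
    X = ∑ j, ((pauli j * X).trace / 2) • pauli j := by
  ext a b
  fin_cases a <;> fin_cases b <;>
    simp [Fin.sum_univ_four, pauli, σx, σy, σz, Matrix.trace_fin_two, Matrix.mul_apply] <;>
    ring_nf <;> simp only [Complex.I_sq] <;> ring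

theorem eq_trace_div_two_smul_one_of_forall_trace_pauli_mul_eq_zero
    {X : Matrix (Fin 2) (Fin 2) ℂ} (h : ∀ j ≠ 0, (pauli j * X).trace = 0) :
    X = (X.trace / 2) • 1 := by
  conv_lhs => rw [eq_sum_smul_pauli X]
  rw [Fin.sum_univ_four, h 1 (by decide), h 2 (by decide), h 3 (by decide)]
  simp [pauli]

theorem trace_conjTranspose_mul_self_sum_smul_pauli (a : Fin 4 → ℂ) :
    ((∑ j, a j • pauli j)ᴴ * ∑ j, a j • pauli j).trace = 2 * ∑ j, (Complex.normSq (a j) : ℂ) := by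
  simp only [Matrix.conjTranspose_sum, Matrix.conjTranspose_smul, pauli_conjTranspose,
    Matrix.sum_mul, Matrix.smul_mul, Matrix.mul_smul, Matrix.trace_sum,
    Matrix.trace_smul, trace_pauli_mul_pauli, smul_eq_mul, mul_ite, mul_zero,
    Finset.sum_ite_eq', Finset.mem_univ, if_true, Finset.mul_sum]
  refine Finset.sum_congr rfl fun j _ => ?_
  rw [Complex.normSq_eq_conj_mul_self, Complex.star_def]
  ring

noncomputable def pauliChannel (p : Fin 4 → ℝ) (X : Matrix (Fin 2) (Fin 2) ℂ) :
    Matrix (Fin 2) (Fin 2) ℂ :=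
  ∑ k, (p k : ℂ) • (pauli k * X * pauli k)

def pauliChannelEigenvalue (p : Fin 4 → ℝ) (j : Fin 4) : ℝ := ∑ k, p k * pauliSign k j

theorem pauliChannel_sum_smul_pauli (p : Fin 4 → ℝ) (a : Fin 4 → ℂ) :
    pauliChannel p (∑ j, a j • pauli j) =
      ∑ j, ((pauliChannelEigenvalue p j : ℂ) * a j) • pauli j := by
  simp only [pauliChannel, pauliChannelEigenvalue, Matrix.mul_sum, Matrix.sum_mul,
    Matrix.mul_smul, Matrix.smul_mul, pauli_mul_pauli_mul_pauli, Finset.smul_sum, smul_smul]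
  rw [Finset.sum_comm]
  refine Finset.sum_congr rfl fun j _ => ?_
  rw [← Finset.sum_smul]
  push_cast
  rw [Finset.sum_mul]
  refine congrArg (· • pauli j) (Finset.sum_congr rfl fun k _ => ?_)
  ring

theorem sq_pauliChannelEigenvalue_eq_one_of_unitary_conj_eq {p : Fin 4 → ℝ}
    (hp : ∀ j, pauliChannelEigenvalue p j ^ 2 ≤ 1) {W : Matrix (Fin 2) (Fin 2) ℂ}
    (hW : W ∈ Matrix.unitaryGroup (Fin 2) ℂ) {ξ : Matrix (Fin 2) (Fin 2) ℂ}
    (hfix : W * pauliChannel p ξ * Wᴴ = ξ) {j : Fin 4} (hj : (pauli j * ξ).trace ≠ 0) :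
    pauliChannelEigenvalue p j ^ 2 = 1 := by
  set a : Fin 4 → ℂ := fun k => (pauli k * ξ).trace / 2
  set μ := pauliChannelEigenvalue p
  have hξ : ξ = ∑ k, a k • pauli k := eq_sum_smul_pauli ξ
  have htrace := Matrix.trace_conjTranspose_mul_self_unitary_conj hW (pauliChannel p ξ)
  rw [hfix, hξ, pauliChannel_sum_smul_pauli, trace_conjTranspose_mul_self_sum_smul_pauli,
    trace_conjTranspose_mul_self_sum_smul_pauli] at htrace
  simp only [Complex.normSq_mul, Complex.normSq_ofReal, ← Complex.ofReal_sum] at htrace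
  have hsum : ∑ k, μ k ^ 2 * Complex.normSq (a k) = ∑ k, Complex.normSq (a k) := by
    simpa only [sq, Complex.ofReal_inj] using (mul_left_cancel₀ two_ne_zero htrace).symm
  have hterm := (Finset.sum_eq_sum_iff_of_le fun k _ =>
    mul_le_of_le_one_left (Complex.normSq_nonneg (a k)) (hp k)).mp hsum j (Finset.mem_univ j)
  have haj : Complex.normSq (a j) ≠ 0 :=
    Complex.normSq_eq_zero.not.mpr (div_ne_zero hj two_ne_zero)
  exact mul_right_cancel₀ haj (hterm.trans (one_mul _).symm)

theorem ptraceH_kronecker (A B : Matrix (Fin 2) (Fin 2) ℂ) : ptraceH (A ⊗ₖ B) = B.trace • A := by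
  ext a b
  simp only [ptraceH, Matrix.of_apply, Matrix.kroneckerMap_apply, Matrix.smul_apply, Matrix.trace,
    Matrix.diag_apply, smul_eq_mul, Finset.mul_sum, mul_comm]

theorem ptraceH_sum {ι : Type*} (s : Finset ι) (X : ι → Matrix (Fin 2 × Fin 2) (Fin 2 × Fin 2) ℂ) :
    ptraceH (∑ i ∈ s, X i) = ∑ i ∈ s, ptraceH (X i) := by
  ext a b
  simp only [ptraceH, Matrix.of_apply, Matrix.sum_apply]
  exact Finset.sum_comm

theorem ptraceH_smul (c : ℂ) (X : Matrix (Fin 2 × Fin 2) (Fin 2 × Fin 2) ℂ) :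
    ptraceH (c • X) = c • ptraceH X := by
  ext a b
  simp only [ptraceH, Matrix.of_apply, Matrix.smul_apply, smul_eq_mul, Finset.mul_sum]

theorem pauli_kronecker_conjTranspose (k : Fin 4) : (pauli k ⊗ₖ pauli k)ᴴ = pauli k ⊗ₖ pauli k := by
  rw [Matrix.conjTranspose_kronecker, pauli_conjTranspose]

theorem ptraceH_pauli_kronecker_mul_mul (k l : Fin 4) (ξ : Matrix (Fin 2) (Fin 2) ℂ) :
    ptraceH ((pauli k ⊗ₖ pauli k) * (ξ ⊗ₖ ((1 / 2 : ℂ) • (1 : Matrix (Fin 2) (Fin 2) ℂ))) *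
        (pauli l ⊗ₖ pauli l)) = if k = l then pauli k * ξ * pauli l else 0 := by
  rw [← Matrix.mul_kronecker_mul, ← Matrix.mul_kronecker_mul, ptraceH_kronecker, Matrix.mul_smul,
    Matrix.mul_one, Matrix.smul_mul, Matrix.trace_smul, trace_pauli_mul_pauli]
  split_ifs <;> simp

theorem ptraceH_conj_sum_smul_pauli_kronecker (d : Fin 4 → ℂ) (ξ : Matrix (Fin 2) (Fin 2) ℂ) :
    ptraceH ((∑ k, d k • (pauli k ⊗ₖ pauli k)) *
        (ξ ⊗ₖ ((1 / 2 : ℂ) • (1 : Matrix (Fin 2) (Fin 2) ℂ))) *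
        (∑ k, d k • (pauli k ⊗ₖ pauli k))ᴴ) =
      pauliChannel (fun k => Complex.normSq (d k)) ξ := by
  simp only [pauliChannel, Matrix.conjTranspose_sum, Matrix.conjTranspose_smul,
    pauli_kronecker_conjTranspose, Matrix.sum_mul, Matrix.mul_sum, Matrix.smul_mul, Matrix.mul_smul, ptraceH_sum, ptraceH_smul,
    ptraceH_pauli_kronecker_mul_mul, smul_ite, smul_zero, Finset.sum_ite_eq', Finset.mem_univ,
    if_true]
  refine Finset.sum_congr rfl fun k _ => ?_
  rw [smul_smul, Complex.normSq_eq_conj_mul_self, Complex.star_def]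

theorem exp_smul_pauli_kronecker (θ : ℝ) (k : Fin 4) :
    NormedSpace.exp (((θ : ℂ) * Complex.I) • (pauli k ⊗ₖ pauli k)) =
      (Real.cos θ : ℂ) • 1 + ((Real.sin θ : ℂ) * Complex.I) • (pauli k ⊗ₖ pauli k) := by
  have hsq : (pauli k ⊗ₖ pauli k) * (pauli k ⊗ₖ pauli k) = 1 := by
    rw [← Matrix.mul_kronecker_mul, pauli_mul_self, Matrix.one_kronecker_one]
  rw [NormedSpace.exp_smul_of_mul_self_eq_one hsq, Complex.cosh_mul_I, Complex.sinh_mul_I,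
    Complex.ofReal_cos, Complex.ofReal_sin]

noncomputable def cartanCoeff (αx αy αz : ℝ) : Fin 4 → ℂ :=
  let cx := Real.cos (αx / 2); let sx := Real.sin (αx / 2)
  let cy := Real.cos (αy / 2); let sy := Real.sin (αy / 2)
  let cz := Real.cos (αz / 2); let sz := Real.sin (αz / 2)
  ![(cx * cy * cz : ℝ) + (sx * sy * sz : ℝ) * Complex.I,
    (cx * sy * sz : ℝ) + (sx * cy * cz : ℝ) * Complex.I,
    (sx * cy * sz : ℝ) + (cx * sy * cz : ℝ) * Complex.I,
    (sx * sy * cz : ℝ) + (cx * cy * sz : ℝ) * Complex.I]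

theorem Dmat_eq_sum_smul_pauli_kronecker (αx αy αz : ℝ) :
    Dmat αx αy αz = ∑ k, cartanCoeff αx αy αz k • (pauli k ⊗ₖ pauli k) := by
  have hsplit : (Complex.I / 2) • ((αx : ℂ) • (σx ⊗ₖ σx) + (αy : ℂ) • (σy ⊗ₖ σy) +
      (αz : ℂ) • (σz ⊗ₖ σz)) =
      (((αx / 2 : ℝ) : ℂ) * Complex.I) • (pauli 1 ⊗ₖ pauli 1) +
      ((((αy / 2 : ℝ) : ℂ) * Complex.I) • (pauli 2 ⊗ₖ pauli 2) +
       (((αz / 2 : ℝ) : ℂ) * Complex.I) • (pauli 3 ⊗ₖ pauli 3)) := by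
    rw [show pauli 1 = σx from rfl, show pauli 2 = σy from rfl, show pauli 3 = σz from rfl]
    match_scalars <;> ring
  have hcomm (j k : Fin 4) (hj : j ≠ 0) (hk : k ≠ 0) (hjk : j ≠ k) (a b : ℂ) :
      Commute (a • (pauli j ⊗ₖ pauli j)) (b • (pauli k ⊗ₖ pauli k)) :=
    ((Matrix.commute_kronecker_self_of_mul_eq_neg
      (pauli_anticommute j k hj hk hjk)).smul_left a).smul_right b
  rw [Dmat, hsplit, Matrix.exp_add_of_commute, Matrix.exp_add_of_commute,
    exp_smul_pauli_kronecker, exp_smul_pauli_kronecker, exp_smul_pauli_kronecker]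
  · simp only [cartanCoeff, Fin.sum_univ_four]
    generalize Real.cos (αx / 2) = cx
    generalize Real.sin (αx / 2) = sx
    generalize Real.cos (αy / 2) = cy
    generalize Real.sin (αy / 2) = sy
    generalize Real.cos (αz / 2) = cz
    generalize Real.sin (αz / 2) = sz
    ext ⟨i1, i2⟩ ⟨j1, j2⟩
    fin_cases i1 <;> fin_cases i2 <;> fin_cases j1 <;> fin_cases j2 <;>
      simp [pauli, σx, σy, σz, Matrix.mul_apply, Fintype.sum_prod_type, Fin.sum_univ_succ,
        Matrix.one_apply] <;> ring_nf <;> simp only [Complex.I_sq, Complex.I_pow_three] <;> ring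
  · exact hcomm 2 3 (by decide) (by decide) (by decide) _ _
  · exact (hcomm 1 2 (by decide) (by decide) (by decide) _ _).add_right
      (hcomm 1 3 (by decide) (by decide) (by decide) _ _)

theorem Real.cos_half_sq (θ : ℝ) : Real.cos (θ / 2) ^ 2 = (1 + Real.cos θ) / 2 := by
  rw [Real.cos_sq, mul_div_cancel₀ θ two_ne_zero]; ring

theorem Real.sin_half_sq (θ : ℝ) : Real.sin (θ / 2) ^ 2 = (1 - Real.cos θ) / 2 := by
  rw [Real.sin_sq, Real.cos_half_sq]; ring

noncomputable def cartanEigenvalue (αx αy αz : ℝ) : Fin 4 → ℝ :=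
  ![1, Real.cos αy * Real.cos αz, Real.cos αx * Real.cos αz, Real.cos αx * Real.cos αy]

theorem pauliChannelEigenvalue_normSq_cartanCoeff (αx αy αz : ℝ) :
    pauliChannelEigenvalue (fun k => Complex.normSq (cartanCoeff αx αy αz k)) =
      cartanEigenvalue αx αy αz := by
  funext j
  fin_cases j <;>
    simp only [pauliChannelEigenvalue, pauliSign, cartanCoeff, cartanEigenvalue, Fin.sum_univ_four,
      Matrix.cons_val, Complex.normSq_add_mul_I, mul_pow, Real.cos_half_sq, Real.sin_half_sq] <;>
    simp +decide <;> ring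

theorem cartanEigenvalue_mem_Icc {αx αy αz : ℝ} (hza : |αz| ≤ αy) (hyx : αy ≤ αx)
    (hx : αx ≤ Real.pi / 2) {j : Fin 4} (hj : j ≠ 0) :
    cartanEigenvalue αx αy αz j ∈ Set.Icc 0 (Real.cos αy) := by
  have hy0 : 0 ≤ αy := (abs_nonneg αz).trans hza
  have hcx : 0 ≤ Real.cos αx := Real.cos_nonneg_of_mem_Icc ⟨by linarith [Real.pi_pos], hx⟩
  have hcz : 0 ≤ Real.cos αz := by
    rw [← Real.cos_abs]
    exact Real.cos_nonneg_of_mem_Icc ⟨by linarith [Real.pi_pos, abs_nonneg αz], by linarith⟩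
  have hcxy : Real.cos αx ≤ Real.cos αy :=
    Real.cos_le_cos_of_nonneg_of_le_pi hy0 (by linarith [Real.pi_pos]) hyx
  have hcy : 0 ≤ Real.cos αy := hcx.trans hcxy
  fin_cases j
  · exact absurd rfl hj
  · exact ⟨mul_nonneg hcy hcz, mul_le_of_le_one_right hcy (Real.cos_le_one αz)⟩
  · exact ⟨mul_nonneg hcx hcz, (mul_le_of_le_one_right hcx (Real.cos_le_one αz)).trans hcxy⟩
  · exact ⟨mul_nonneg hcx hcy, mul_le_of_le_one_left hcy (Real.cos_le_one αx)⟩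

theorem cartanEigenvalue_sq_le_one {αx αy αz : ℝ} (hza : |αz| ≤ αy) (hyx : αy ≤ αx)
    (hx : αx ≤ Real.pi / 2) (j : Fin 4) : cartanEigenvalue αx αy αz j ^ 2 ≤ 1 := by
  rcases eq_or_ne j 0 with rfl | hj
  · simp [cartanEigenvalue]
  · obtain ⟨h0, h1⟩ := cartanEigenvalue_mem_Icc hza hyx hx hj
    exact pow_le_one₀ h0 (h1.trans (Real.cos_le_one αy))

/-- If the concurrent memory channel
`C(ξ) = W₂ · Tr_H[D(α)(ξ ⊗ I/2)D(α)†] · W₂†` (with `α` in the canonical range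
`0 ≤ |α_z| ≤ α_y ≤ α_x ≤ π/2` and `W₂` unitary) has a fixed point other than the
maximally mixed state, then `α_y = α_z = 0`, i.e. the interaction is a controlled
unitary. -/
theorem nonunique_fixed_point_forces_controlled (αx αy αz : ℝ)
    (hza : |αz| ≤ αy) (hyx : αy ≤ αx) (hx : αx ≤ Real.pi / 2)
    (W₂ : Matrix (Fin 2) (Fin 2) ℂ) (hW : W₂ ∈ Matrix.unitaryGroup (Fin 2) ℂ)
    (ξ : Matrix (Fin 2) (Fin 2) ℂ) (hξ : ξ.PosSemidef ∧ ξ.trace = 1)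
    (hne : ξ ≠ (1 / 2 : ℂ) • (1 : Matrix (Fin 2) (Fin 2) ℂ))
    (hfix : W₂ * ptraceH (Dmat αx αy αz *
        (ξ ⊗ₖ ((1 / 2 : ℂ) • (1 : Matrix (Fin 2) (Fin 2) ℂ))) *
        (Dmat αx αy αz)ᴴ) * W₂ᴴ = ξ) :
    αy = 0 ∧ αz = 0 := by
  rw [Dmat_eq_sum_smul_pauli_kronecker, ptraceH_conj_sum_smul_pauli_kronecker] at hfix
  obtain ⟨j, hj0, hj⟩ : ∃ j ≠ 0, (pauli j * ξ).trace ≠ 0 := by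
    by_contra! h
    exact hne (by rw [eq_trace_div_two_smul_one_of_forall_trace_pauli_mul_eq_zero h, hξ.2])
  have hμ := sq_pauliChannelEigenvalue_eq_one_of_unitary_conj_eq
    (by rw [pauliChannelEigenvalue_normSq_cartanCoeff]; exact cartanEigenvalue_sq_le_one hza hyx hx)
    hW hfix hj
  rw [pauliChannelEigenvalue_normSq_cartanCoeff] at hμ
  obtain ⟨hμ0, hμy⟩ := cartanEigenvalue_mem_Icc hza hyx hx hj0
  have hcos : Real.cos αy = 1 :=
    le_antisymm (Real.cos_le_one αy) ((pow_eq_one_iff_of_nonneg hμ0 two_ne_zero).mp hμ ▸ hμy)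
  have hαy : αy = 0 :=
    (Real.cos_eq_one_iff_of_lt_of_lt (by linarith [Real.pi_pos, (abs_nonneg αz).trans hza])
      (by linarith [Real.pi_pos])).mp hcos
  exact ⟨hαy, abs_nonpos_iff.mp (hαy ▸ hza)⟩
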